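/- arXiv:1911.07539 — 2 statements merged into one kernel-verified Lean document; each statement's English description precedes it below -/
import Mathlib

section
/- Generalized Laufer algorithm: in the resolution-lattice setup, for any ℓ' ∈ L' there is a unique minimal element s(ℓ') of the set {s ∈ S' : s − ℓ' ∈ L, s − ℓ' ≥ 0}, and it is reached by the following procedure: set x₀ = ℓ'; if x_i ∉ S', choose any v with (x_i, e_v) > 0 and set x_{i+1} = x_i + e_v; this procedure terminates after finitely many steps at s(ℓ'). -/
open Matrix Finset

variable {V : Type*} [Fintype V] [DecidableEq V]

/-- The rational intersection pairing associated with an integral matrix `M`. -/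
noncomputable def ipair (M : Matrix V V ℤ) (x y : V → ℚ) : ℚ :=
  x ⬝ᵥ ((M.map fun n : ℤ => (n : ℚ)) *ᵥ y)

/-- The form given by `M` is negative definite. -/
def NegDef (M : Matrix V V ℤ) : Prop :=
  ∀ x : V → ℚ, x ≠ 0 → ipair M x x < 0

/-- A rational vector has integer coordinates (i.e. lies in `L = ℤ^V`). -/
def IsIntegralVec (x : V → ℚ) : Prop := ∀ v, ∃ n : ℤ, x v = n

/-- Membership in the dual lattice `L' = {x : (x, e_v) ∈ ℤ for all v}`. -/
def InDual (M : Matrix V V ℤ) (x : V → ℚ) : Prop :=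
  ∀ v, ∃ n : ℤ, ipair M x (Pi.single v 1) = n

/-- Membership in the Lipman (antinef) cone `S' = {x ∈ L' : (x, e_v) ≤ 0 ∀ v}`. -/
def InLipman (M : Matrix V V ℤ) (x : V → ℚ) : Prop :=
  InDual M x ∧ ∀ v, ipair M x (Pi.single v 1) ≤ 0

/-- Two elements of `L'` have the same class in `H = L'/L`. -/
def SameClass (x y : V → ℚ) : Prop := IsIntegralVec (x - y)

/-! ### Auxiliary lemmas -/

lemma pair_single (M : Matrix V V ℤ) (hsym : M.IsSymm) (x : V → ℚ) (v : V) :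
    ipair M x (Pi.single v 1) = ((M.map fun n : ℤ => (n : ℚ)) *ᵥ x) v := by
  simp only [ipair, dotProduct, mulVec, Pi.single_apply, mul_ite, mul_one, mul_zero,
    Finset.sum_ite_eq', Finset.mem_univ, if_true, Matrix.map_apply]
  exact Finset.sum_congr rfl fun u _ => by rw [hsym.apply u v, mul_comm]

/-- Lemma A: the inverse of an "M-matrix" is nonpositive: if `M c ≤ 0` then `c ≥ 0`. -/
lemma lemA (M : Matrix V V ℤ) (hneg : NegDef M) (hoff : ∀ u v : V, u ≠ v → 0 ≤ M u v)
    (c : V → ℚ) (hc : ∀ v, ((M.map fun n : ℤ => (n : ℚ)) *ᵥ c) v ≤ 0) (v : V) : 0 ≤ c v := by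
  set M' := M.map fun n : ℤ => (n : ℚ) with hM'
  set cm : V → ℚ := fun u => max (-(c u)) 0 with hcm
  set cp : V → ℚ := fun u => max (c u) 0 with hcp
  have hcmn : ∀ u, 0 ≤ cm u := fun u => le_max_right _ _
  have hcpn : ∀ u, 0 ≤ cp u := fun u => le_max_right _ _
  have hsplit : ∀ u, cp u - c u = cm u := by
    intro u; rcases le_total (c u) 0 with h | h
    · simp [hcp, hcm, max_eq_right h, max_eq_left (neg_nonneg.2 h)]
    · simp [hcp, hcm, max_eq_left h, max_eq_right (neg_nonpos.2 h)]
  have hprod : ∀ u, cm u * cp u = 0 := by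
    intro u; rcases le_total (c u) 0 with h | h
    · simp [hcp, max_eq_right h]
    · simp [hcm, max_eq_right (neg_nonpos.2 h)]
  have h1 : cm ⬝ᵥ (M' *ᵥ c) ≤ 0 := by
    apply Finset.sum_nonpos
    intro u _
    exact mul_nonpos_of_nonneg_of_nonpos (hcmn u) (hc u)
  have h2 : 0 ≤ cm ⬝ᵥ (M' *ᵥ cp) := by
    unfold dotProduct Matrix.mulVec dotProduct
    apply Finset.sum_nonneg
    intro u _
    rw [Finset.mul_sum]
    apply Finset.sum_nonneg
    intro w _
    rcases eq_or_ne u w with rfl | hne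
    · rw [show cm u * (M' u u * cp u) = M' u u * (cm u * cp u) by ring, hprod u, mul_zero]
    · have : (0:ℚ) ≤ M' u w := by
        rw [hM', Matrix.map_apply]; exact_mod_cast hoff u w hne
      exact mul_nonneg (hcmn u) (mul_nonneg this (hcpn w))
  have hmv : M' *ᵥ cm = M' *ᵥ cp - M' *ᵥ c := by
    have hfun : cp - c = cm := funext fun u => hsplit u
    rw [← Matrix.mulVec_sub, hfun]
  have h3 : 0 ≤ cm ⬝ᵥ (M' *ᵥ cm) := by
    rw [hmv, dotProduct_sub]
    linarith
  have hzero : cm = 0 := by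
    by_contra h
    have := hneg cm h
    rw [ipair] at this
    rw [hM'] at h3
    linarith
  have h4 := congrFun hzero v
  simp only [hcm, Pi.zero_apply] at h4
  have := le_max_left (-(c v)) 0
  rw [h4] at this
  linarith

/-- Lemma B: if `c ≥ 0` and `c v = 0` then `(M c) v ≥ 0` (off-diagonal entries are `≥ 0`). -/
lemma lemB (M : Matrix V V ℤ) (hoff : ∀ u v : V, u ≠ v → 0 ≤ M u v)
    (c : V → ℚ) (hc : ∀ u, 0 ≤ c u) (v : V) (hv : c v = 0) :
    0 ≤ ((M.map fun n : ℤ => (n : ℚ)) *ᵥ c) v := by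
  apply Finset.sum_nonneg
  intro w _
  rcases eq_or_ne v w with rfl | hne
  · simp [hv]
  · exact mul_nonneg (by simp only [Matrix.map_apply]; exact_mod_cast hoff v w hne) (hc w)

/-- Lemma C: a negative definite matrix is surjective (over `ℚ`). -/
lemma lemC (M : Matrix V V ℤ) (hneg : NegDef M) (b : V → ℚ) :
    ∃ z : V → ℚ, (M.map fun n : ℤ => (n : ℚ)) *ᵥ z = b := by
  set M' := M.map fun n : ℤ => (n : ℚ) with hM'
  have hinj : Function.Injective M'.mulVecLin := by
    intro a b hab
    by_contra h
    have hne : a - b ≠ 0 := sub_ne_zero.2 h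
    have h0 : M' *ᵥ (a - b) = 0 := by
      rw [Matrix.mulVec_sub]
      simp only [Matrix.mulVecLin_apply] at hab
      rw [hab, sub_self]
    have := hneg (a - b) hne
    rw [ipair, ← hM', h0, dotProduct_zero] at this
    exact lt_irrefl _ this
  have hsurj : Function.Surjective M'.mulVecLin :=
    (LinearMap.injective_iff_surjective).1 hinj
  obtain ⟨z, hz⟩ := hsurj b
  exact ⟨z, by rwa [Matrix.mulVecLin_apply] at hz⟩

/-- Existence of an antinef representative above `ℓ'` in the same class. -/
lemma exists_bound (M : Matrix V V ℤ) (hsym : M.IsSymm) (hneg : NegDef M)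
    (hoff : ∀ u v : V, u ≠ v → 0 ≤ M u v) (ℓ' : V → ℚ) (hℓ' : InDual M ℓ') :
    ∃ t : V → ℚ, InLipman M t ∧ IsIntegralVec (t - ℓ') ∧ ∀ v, ℓ' v ≤ t v := by
  set M' := M.map fun n : ℤ => (n : ℚ) with hM'
  obtain ⟨z, hz⟩ := lemC M hneg (fun _ => (-1 : ℚ))
  have hzpos : ∀ u, 0 ≤ z u := lemA M hneg hoff z (fun v => by rw [hz]; norm_num)
  set k : ℚ := ∑ w, (|(M' *ᵥ ℓ') w| + ∑ u, |M' w u|) with hk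
  have hgnn : ∀ w : V, 0 ≤ |(M' *ᵥ ℓ') w| + ∑ u, |M' w u| := fun w =>
    add_nonneg (abs_nonneg _) (Finset.sum_nonneg fun u _ => abs_nonneg _)
  have hkb : ∀ v : V, |(M' *ᵥ ℓ') v| + ∑ u, |M' v u| ≤ k :=
    fun v => Finset.single_le_sum (fun w _ => hgnn w) (Finset.mem_univ v)
  have hk0 : 0 ≤ k := Finset.sum_nonneg fun w _ => hgnn w
  set ci : V → ℤ := fun u => ⌈k * z u⌉ with hci
  set c : V → ℚ := fun u => (ci u : ℚ) with hc
  have hclb : ∀ u, k * z u ≤ c u := fun u => Int.le_ceil _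
  have hcub : ∀ u, c u ≤ k * z u + 1 := fun u => le_of_lt (Int.ceil_lt_add_one _)
  have hc0 : ∀ u, 0 ≤ c u := fun u => le_trans (mul_nonneg hk0 (hzpos u)) (hclb u)
  have hMc : ∀ v, (M' *ᵥ c) v ≤ -k + ∑ u, |M' v u| := by
    intro v
    have step : ∀ u, M' v u * c u ≤ M' v u * (k * z u) + |M' v u| := by
      intro u
      rcases le_or_gt 0 (M' v u) with h | h
      · have := mul_le_mul_of_nonneg_left (hcub u) h
        have habs := le_abs_self (M' v u)
        nlinarith
      · have := mul_le_mul_of_nonpos_left (hclb u) (le_of_lt h)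
        have habs : (0:ℚ) ≤ |M' v u| := abs_nonneg _
        nlinarith
    calc (M' *ᵥ c) v = ∑ u, M' v u * c u := rfl
      _ ≤ ∑ u, (M' v u * (k * z u) + |M' v u|) := Finset.sum_le_sum fun u _ => step u
      _ = k * (∑ u, M' v u * z u) + ∑ u, |M' v u| := by
          rw [Finset.sum_add_distrib, Finset.mul_sum]
          congr 1
          exact Finset.sum_congr rfl fun u _ => by ring
      _ = -k + ∑ u, |M' v u| := by
          have : (∑ u, M' v u * z u) = (M' *ᵥ z) v := rfl
          rw [this, hz]; ring
  have hMt : ∀ v, (M' *ᵥ (ℓ' + c)) v ≤ 0 := by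
    intro v
    rw [Matrix.mulVec_add]
    have h1 := hMc v
    have h2 := hkb v
    have h3 := le_abs_self ((M' *ᵥ ℓ') v)
    simp only [Pi.add_apply]
    linarith
  refine ⟨ℓ' + c, ⟨?_, ?_⟩, ?_, ?_⟩
  · intro v
    obtain ⟨n, hn⟩ := hℓ' v
    refine ⟨n + ∑ u, M v u * ci u, ?_⟩
    rw [pair_single M hsym, Matrix.mulVec_add]
    simp only [Pi.add_apply]
    rw [← pair_single M hsym ℓ' v, hn]
    have heq : (M' *ᵥ c) v = ((∑ u, M v u * ci u : ℤ) : ℚ) := by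
      push_cast
      exact Finset.sum_congr rfl fun u _ => rfl
    rw [heq]
    push_cast
    ring
  · intro v
    rw [pair_single M hsym]
    exact hMt v
  · intro v
    exact ⟨ci v, by simp [hc]⟩
  · intro v
    simp only [Pi.add_apply, le_add_iff_nonneg_right]
    exact hc0 v

/-- Any valid computation sequence, given any antinef bound `t`, terminates below `t`. -/
theorem main_seq (M : Matrix V V ℤ) (hsym : M.IsSymm)
    (hoff : ∀ u v : V, u ≠ v → 0 ≤ M u v) (ℓ' : V → ℚ)
    (t : V → ℚ) (ht1 : ∀ v, ((M.map fun n : ℤ => (n : ℚ)) *ᵥ t) v ≤ 0)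
    (ht2 : IsIntegralVec (t - ℓ')) (ht3 : ∀ v, ℓ' v ≤ t v)
    (x : ℕ → V → ℚ) (hx0 : x 0 = ℓ')
    (hstep : ∀ i : ℕ,
      (¬ InLipman M (x i) →
        ∃ v, 0 < ipair M (x i) (Pi.single v 1) ∧ x (i + 1) = x i + Pi.single v 1) ∧
      (InLipman M (x i) → x (i + 1) = x i)) :
    ∃ j : ℕ, InLipman M (x j) ∧ (∀ n, j ≤ n → x n = x j) ∧
      IsIntegralVec (x j - ℓ') ∧ (∀ v, ℓ' v ≤ x j v) ∧ (∀ v, x j v ≤ t v) := by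
  set M' := M.map fun n : ℤ => (n : ℚ) with hM'
  have inv : ∀ i, IsIntegralVec (x i - ℓ') ∧ (∀ v, ℓ' v ≤ x i v) ∧ (∀ v, x i v ≤ t v) := by
    intro i
    induction i with
    | zero =>
      refine ⟨fun v => ⟨0, by simp [hx0]⟩, fun v => by simp [hx0], fun v => by rw [hx0]; exact ht3 v⟩
    | succ i ih =>
      obtain ⟨hint, hlb, hub⟩ := ih
      by_cases hL : InLipman M (x i)
      · rw [(hstep i).2 hL]; exact ⟨hint, hlb, hub⟩
      · obtain ⟨v, hv, heq⟩ := (hstep i).1 hL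
        have hcnn : ∀ u, 0 ≤ t u - x i u := fun u => sub_nonneg.2 (hub u)
        have hMtx : (M' *ᵥ (t - x i)) v < 0 := by
          rw [Matrix.mulVec_sub]
          have h1 := ht1 v
          have h2 : 0 < (M' *ᵥ x i) v := by rw [← pair_single M hsym]; exact hv
          simp only [Pi.sub_apply]
          linarith
        have hne : t v - x i v ≠ 0 := by
          intro h0
          have := lemB M hoff (t - x i) (fun u => hcnn u) v (by simpa using h0)
          rw [← hM'] at this
          linarith
        have hpos : 0 < t v - x i v := lt_of_le_of_ne (hcnn v) (Ne.symm hne)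
        have hone : 1 ≤ t v - x i v := by
          obtain ⟨n, hn⟩ := ht2 v
          obtain ⟨m, hm⟩ := hint v
          have h1 : t v - ℓ' v = (n:ℚ) := hn
          have h2 : x i v - ℓ' v = (m:ℚ) := hm
          have hsub : t v - x i v = ((n - m : ℤ) : ℚ) := by push_cast; linarith
          rw [hsub] at hpos ⊢
          have h3 : (0:ℤ) < n - m := by exact_mod_cast hpos
          have h4 : (1:ℤ) ≤ n - m := h3
          exact_mod_cast h4
        refine ⟨?_, ?_, ?_⟩
        · intro u
          obtain ⟨m, hm⟩ := hint u
          have hm' : x i u - ℓ' u = (m:ℚ) := hm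
          rcases eq_or_ne u v with rfl | hne'
          · refine ⟨m + 1, ?_⟩
            rw [heq]
            simp only [Pi.sub_apply, Pi.add_apply, Pi.single_eq_same]
            push_cast
            linarith
          · refine ⟨m, ?_⟩
            rw [heq]
            simp only [Pi.sub_apply, Pi.add_apply, Pi.single_eq_of_ne hne']
            linarith
        · intro u
          rw [heq]
          have : (0:ℚ) ≤ (Pi.single v (1:ℚ) : V → ℚ) u := by
            rcases eq_or_ne u v with rfl | hne'
            · simp
            · simp [Pi.single_eq_of_ne hne']
          have := hlb u
          simp only [Pi.add_apply]
          linarith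
        · intro u
          rw [heq]
          rcases eq_or_ne u v with rfl | hne'
          · simp only [Pi.add_apply, Pi.single_eq_same]
            linarith
          · simp only [Pi.add_apply, Pi.single_eq_of_ne hne']
            have := hub u
            linarith
  have hterm : ∃ j, InLipman M (x j) := by
    by_contra hno
    push_neg at hno
    have hm : ∀ i, (∑ v, (x i v - ℓ' v)) = (i : ℚ) := by
      intro i
      induction i with
      | zero => simp [hx0]
      | succ i ih =>
        obtain ⟨v, hv, heq⟩ := (hstep i).1 (hno i)
        rw [heq]
        have : ∀ u, x i u + (Pi.single v (1:ℚ) : V → ℚ) u - ℓ' u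
            = (x i u - ℓ' u) + (Pi.single v (1:ℚ) : V → ℚ) u := by
          intro u; ring
        calc (∑ u, (x i u + (Pi.single v (1:ℚ) : V → ℚ) u - ℓ' u))
            = ∑ u, ((x i u - ℓ' u) + (Pi.single v (1:ℚ) : V → ℚ) u) :=
              Finset.sum_congr rfl fun u _ => this u
          _ = (∑ u, (x i u - ℓ' u)) + ∑ u, (Pi.single v (1:ℚ) : V → ℚ) u :=
              Finset.sum_add_distrib
          _ = (i : ℚ) + 1 := by
              rw [ih]
              congr 1
              simp [Pi.single_apply]
          _ = ((i + 1 : ℕ) : ℚ) := by push_cast; ring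
    set S : ℚ := ∑ v, (t v - ℓ' v) with hS
    have hbound : ∀ i : ℕ, (i : ℚ) ≤ S := by
      intro i
      rw [← hm i]
      apply Finset.sum_le_sum
      intro u _
      have := (inv i).2.2 u
      linarith
    have hS0 : 0 ≤ S := le_trans (by norm_num) (hbound 0)
    have hceil : S ≤ (⌈S⌉.toNat : ℚ) := by
      have h1 : S ≤ (⌈S⌉ : ℚ) := Int.le_ceil S
      have h2 : ((⌈S⌉.toNat : ℤ) : ℚ) = (⌈S⌉.toNat : ℚ) := by push_cast; ring
      rw [← h2, Int.toNat_of_nonneg (Int.ceil_nonneg hS0)]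
      exact h1
    have := hbound (⌈S⌉.toNat + 1)
    push_cast at this
    linarith
  obtain ⟨j, hj⟩ := hterm
  have hstat : ∀ n, j ≤ n → x n = x j := by
    intro n hn
    obtain ⟨m, rfl⟩ := Nat.exists_eq_add_of_le hn
    clear hn
    induction m with
    | zero => rfl
    | succ m ih =>
      have : x (j + m + 1) = x (j + m) := (hstep (j + m)).2 (by rw [ih]; exact hj)
      rw [show j + (m + 1) = j + m + 1 from rfl, this, ih]
  exact ⟨j, hj, hstat, (inv j).1, (inv j).2.1, (inv j).2.2⟩

/-- One step of the Laufer algorithm (with an arbitrary choice of vertex). -/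
noncomputable def laufF (M : Matrix V V ℤ) (y : V → ℚ) : V → ℚ :=
  if h : ∃ v, 0 < ipair M y (Pi.single v 1) then y + Pi.single h.choose 1 else y

lemma laufF_of_lipman (M : Matrix V V ℤ) {y : V → ℚ} (h : InLipman M y) :
    laufF M y = y :=
  dif_neg fun ⟨v, hv⟩ => absurd hv (not_lt.2 (h.2 v))

lemma laufF_spec (M : Matrix V V ℤ) {y : V → ℚ} (hd : InDual M y) (h : ¬ InLipman M y) :
    ∃ v, 0 < ipair M y (Pi.single v 1) ∧ laufF M y = y + Pi.single v 1 := by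
  have hex : ∃ v, 0 < ipair M y (Pi.single v 1) := by
    by_contra hno
    push_neg at hno
    exact h ⟨hd, fun v => hno v⟩
  exact ⟨hex.choose, hex.choose_spec, dif_pos hex⟩

lemma indual_add_single (M : Matrix V V ℤ) (hsym : M.IsSymm) {y : V → ℚ}
    (hd : InDual M y) (w : V) : InDual M (y + Pi.single w 1) := by
  intro v
  obtain ⟨n, hn⟩ := hd v
  refine ⟨n + M v w, ?_⟩
  rw [pair_single M hsym, Matrix.mulVec_add]
  have h1 : ((M.map fun n : ℤ => (n : ℚ)) *ᵥ (Pi.single w 1)) v = (M v w : ℚ) := by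
    simp [Matrix.mulVec, dotProduct, Pi.single_apply, mul_ite, Finset.sum_ite_eq']
  simp only [Pi.add_apply]
  rw [h1, ← pair_single M hsym y v, hn]
  push_cast
  ring

/-- generalized Laufer algorithm: for any `ℓ' ∈ L'` there is a unique minimal
element `s(ℓ')` of `{s ∈ S' : s - ℓ' ∈ L, s - ℓ' ≥ 0}`, and moreover every computation
sequence starting at `ℓ'` (adding a base vector `e_v` with `(x_i, e_v) > 0` as long as
`x_i ∉ S'`, and stabilizing once in `S'`) becomes stationary at `s(ℓ')` after finitely
many steps. -/
theorem generalized_laufer (M : Matrix V V ℤ) (hsym : M.IsSymm) (hneg : NegDef M)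
    (hoff : ∀ u v : V, u ≠ v → 0 ≤ M u v)
    (hconn : (SimpleGraph.fromRel fun u v : V => 0 < M u v).Connected)
    (ℓ' : V → ℚ) (hℓ' : InDual M ℓ') :
    ∃! s : V → ℚ,
      ((InLipman M s ∧ IsIntegralVec (s - ℓ') ∧ ∀ v, ℓ' v ≤ s v) ∧
        ∀ t : V → ℚ, (InLipman M t ∧ IsIntegralVec (t - ℓ') ∧ ∀ v, ℓ' v ≤ t v) →
          ∀ v, s v ≤ t v) ∧
      (∀ x : ℕ → V → ℚ, x 0 = ℓ' →
        (∀ i : ℕ,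
          (¬ InLipman M (x i) →
            ∃ v, 0 < ipair M (x i) (Pi.single v 1) ∧ x (i + 1) = x i + Pi.single v 1) ∧
          (InLipman M (x i) → x (i + 1) = x i)) →
        ∃ N : ℕ, ∀ n, N ≤ n → x n = s) := by
  obtain ⟨t0, ht0L, ht0I, ht0ge⟩ := exists_bound M hsym hneg hoff ℓ' hℓ'
  have ht0M : ∀ v, ((M.map fun n : ℤ => (n : ℚ)) *ᵥ t0) v ≤ 0 :=
    fun v => by rw [← pair_single M hsym]; exact ht0L.2 v
  -- the canonical sequence
  set xc : ℕ → V → ℚ := fun i => (laufF M)^[i] ℓ' with hxc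
  have hxc0 : xc 0 = ℓ' := rfl
  have hxcs : ∀ i, xc (i + 1) = laufF M (xc i) :=
    fun i => Function.iterate_succ_apply' (laufF M) i ℓ'
  have hdual : ∀ i, InDual M (xc i) := by
    intro i
    induction i with
    | zero => exact hℓ'
    | succ i ih =>
      rw [hxcs i]
      by_cases hL : InLipman M (xc i)
      · rw [laufF_of_lipman M hL]; exact ih
      · obtain ⟨v, _, heq⟩ := laufF_spec M ih hL
        rw [heq]
        exact indual_add_single M hsym ih v
  have hsteps : ∀ i : ℕ,
      (¬ InLipman M (xc i) →
        ∃ v, 0 < ipair M (xc i) (Pi.single v 1) ∧ xc (i + 1) = xc i + Pi.single v 1) ∧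
      (InLipman M (xc i) → xc (i + 1) = xc i) := by
    intro i
    constructor
    · intro hnl
      obtain ⟨v, hv, heq⟩ := laufF_spec M (hdual i) hnl
      exact ⟨v, hv, by rw [hxcs i, heq]⟩
    · intro hL
      rw [hxcs i, laufF_of_lipman M hL]
  obtain ⟨j, hjL, hjstat, hjI, hjge, _⟩ :=
    main_seq M hsym hoff ℓ' t0 ht0M ht0I ht0ge xc hxc0 hsteps
  set s : V → ℚ := xc j with hs
  have hsT : InLipman M s ∧ IsIntegralVec (s - ℓ') ∧ ∀ v, ℓ' v ≤ s v := ⟨hjL, hjI, hjge⟩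
  have hsM : ∀ v, ((M.map fun n : ℤ => (n : ℚ)) *ᵥ s) v ≤ 0 :=
    fun v => by rw [← pair_single M hsym]; exact hjL.2 v
  -- minimality of s
  have hmin : ∀ t : V → ℚ, (InLipman M t ∧ IsIntegralVec (t - ℓ') ∧ ∀ v, ℓ' v ≤ t v) →
      ∀ v, s v ≤ t v := by
    rintro t ⟨htL, htI, htge⟩ v
    obtain ⟨j', hj'L, hj'stat, _, _, hj'le⟩ :=
      main_seq M hsym hoff ℓ' t (fun u => by rw [← pair_single M hsym]; exact htL.2 u)
        htI htge xc hxc0 hsteps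
    have h1 : xc (max j j') = xc j := hjstat _ (le_max_left _ _)
    have h2 : xc (max j j') = xc j' := hj'stat _ (le_max_right _ _)
    have : s = xc j' := by rw [hs, ← h1, h2]
    rw [this]
    exact hj'le v
  refine ⟨s, ⟨⟨hsT, hmin⟩, ?_⟩, ?_⟩
  · -- every sequence stabilizes at s
    intro x hx0 hstep'
    obtain ⟨jx, hxL, hxstat, hxI, hxge, _⟩ :=
      main_seq M hsym hoff ℓ' t0 ht0M ht0I ht0ge x hx0 hstep'
    obtain ⟨jx2, _, hxstat2, _, _, hle2⟩ :=
      main_seq M hsym hoff ℓ' s hsM hjI hjge x hx0 hstep'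
    have heq12 : x jx = x jx2 := by
      have h1 : x (max jx jx2) = x jx := hxstat _ (le_max_left _ _)
      have h2 : x (max jx jx2) = x jx2 := hxstat2 _ (le_max_right _ _)
      rw [← h1, h2]
    have hxs : x jx = s := by
      funext v
      refine le_antisymm ?_ (hmin (x jx) ⟨hxL, hxI, hxge⟩ v)
      rw [heq12]
      exact hle2 v
    exact ⟨jx, fun n hn => (hxstat n hn).trans hxs⟩
  · rintro s2 ⟨⟨hs2T, hs2min⟩, _⟩
    funext v
    exact le_antisymm (hs2min s hsT v) (hmin s2 hs2T v)
end

section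
/- In the resolution-lattice setup, for any ℓ' ∈ L' with all coordinates ≤ 0, the output s(ℓ') of the generalized Laufer algorithm equals s_{[ℓ']}, the minimal antinef cycle in the class of ℓ'. -/
open Matrix Finset

variable {V : Type*} [Fintype V] [DecidableEq V]

lemma ipair_eq_sum (M : Matrix V V ℤ) (a b : V → ℚ) :
    ipair M a b = ∑ u, ∑ v, a u * (M u v : ℚ) * b v := by
  simp [ipair, Matrix.mulVec, dotProduct, Finset.mul_sum, mul_assoc]

lemma ipair_single (M : Matrix V V ℤ) (a : V → ℚ) (v : V) :
    ipair M a (Pi.single v 1) = ∑ u, a u * (M u v : ℚ) := by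
  rw [ipair_eq_sum]
  refine Finset.sum_congr rfl fun u _ => ?_
  rw [Finset.sum_eq_single v]
  · simp
  · intro w _ hw; simp [Pi.single_apply, hw]
  · simp

lemma ipair_expand (M : Matrix V V ℤ) (a b : V → ℚ) :
    ipair M a b = ∑ v, b v * ipair M a (Pi.single v 1) := by
  rw [ipair_eq_sum, Finset.sum_comm]
  refine Finset.sum_congr rfl fun v _ => ?_
  rw [ipair_single, Finset.mul_sum]
  exact Finset.sum_congr rfl fun u _ => by ring

lemma lipman_nonneg (M : Matrix V V ℤ) (hneg : NegDef M)
    (hoff : ∀ u v : V, u ≠ v → 0 ≤ M u v)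
    (x : V → ℚ) (hx : InLipman M x) : ∀ v, 0 ≤ x v := by
  set n : V → ℚ := fun v => max (-(x v)) 0 with hn
  have hn0 : ∀ v, 0 ≤ n v := fun v => le_max_right _ _
  have hzero : n = 0 := by
    by_contra hne
    have hlt : ipair M n n < 0 := hneg n hne
    -- ipair M x n ≤ 0
    have h1 : ipair M x n ≤ 0 := by
      rw [ipair_expand]
      refine Finset.sum_nonpos fun v _ => ?_
      exact mul_nonpos_of_nonneg_of_nonpos (hn0 v) (hx.2 v)
    -- ipair M (x + n) n ≥ 0
    have h2 : 0 ≤ ipair M (x + n) n := by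
      rw [ipair_eq_sum]
      refine Finset.sum_nonneg fun u _ => Finset.sum_nonneg fun v _ => ?_
      by_cases huv : u = v
      · subst huv
        have : (x u + n u) * n u = 0 := by
          rcases le_or_gt 0 (x u) with h | h
          · have : n u = 0 := by simp [hn, max_eq_right, neg_nonpos_of_nonneg h]
            simp [this]
          · have : n u = -(x u) := max_eq_left (by linarith)
            rw [this]; ring
        calc (0:ℚ) = (x u + n u) * n u * (M u u : ℚ) := by rw [this]; ring
          _ = (x u + n u) * (M u u : ℚ) * n u := by ring
          _ ≤ _ := le_refl _
      · have hM : (0:ℚ) ≤ (M u v : ℚ) := by exact_mod_cast hoff u v huv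
        have hxn : 0 ≤ x u + n u := by
          rcases le_or_gt 0 (x u) with h | h
          · have := hn0 u; linarith
          · have : n u = -(x u) := max_eq_left (by linarith)
            rw [this]; linarith
        positivity
    have hsum : ipair M (x + n) n = ipair M x n + ipair M n n := by
      simp only [ipair_eq_sum, Pi.add_apply, add_mul, Finset.sum_add_distrib]
    linarith
  intro v
  have hnv : max (-(x v)) 0 = 0 := congrFun hzero v
  have : -(x v) ≤ 0 := by
    by_contra h
    push_neg at h
    rw [max_eq_left h.le] at hnv
    linarith
  linarith

/-- if `ℓ' ∈ L'` has all coordinates `≤ 0`, then the minimal element `s(ℓ')` of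
`{s ∈ S' : s ≥ ℓ', s - ℓ' ∈ L}` coincides with `s_{[ℓ']}`, the minimal antinef cycle in the
class of `ℓ'`. -/
theorem laufer_of_nonpos (M : Matrix V V ℤ) (hsym : M.IsSymm) (hneg : NegDef M)
    (hoff : ∀ u v : V, u ≠ v → 0 ≤ M u v)
    (hconn : (SimpleGraph.fromRel fun u v : V => 0 < M u v).Connected)
    (ℓ' : V → ℚ) (hℓ' : InDual M ℓ') (hnonpos : ∀ v, ℓ' v ≤ 0)
    (s : V → ℚ)
    (hs : InLipman M s ∧ IsIntegralVec (s - ℓ') ∧ ∀ v, ℓ' v ≤ s v)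
    (hsmin : ∀ t : V → ℚ, (InLipman M t ∧ IsIntegralVec (t - ℓ') ∧ ∀ v, ℓ' v ≤ t v) →
      ∀ v, s v ≤ t v)
    (sh : V → ℚ) (hsh : InLipman M sh ∧ SameClass sh ℓ')
    (hshmin : ∀ t : V → ℚ, InLipman M t ∧ SameClass t ℓ' → ∀ v, sh v ≤ t v) :
    s = sh := by
  have hss : ∀ v, 0 ≤ sh v := lipman_nonneg M hneg hoff sh hsh.1
  have h1 : ∀ v, s v ≤ sh v :=
    hsmin sh ⟨hsh.1, hsh.2, fun v => (hnonpos v).trans (hss v)⟩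
  have h2 : ∀ v, sh v ≤ s v := hshmin s ⟨hs.1, hs.2.1⟩
  funext v
  exact le_antisymm (h1 v) (h2 v)
end
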